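/- arXiv:1811.08764 — 3 statements merged into one kernel-verified Lean document; each statement's English description precedes it below -/
import Mathlib

section
/- Let X₁,…,Xₙ (n ≥ 2) be i.i.d. real-valued random variables with variance σ² = α > 0 and finite fourth central moment, and let S² be the unbiased sample variance. Then E[(S² − σ²)²] ≥ 2σ⁴/(n·(n−1)), and equality holds if and only if the common distribution is a symmetric two-point distribution: X₁ = a·z + b almost surely for some a ≠ 0, b ∈ ℝ, with z Bernoulli distributed with parameter 1/2. -/
/-!
Write `W = ∑ (Xᵢ - m)` and `V = ∑ (Xᵢ - m)²`. Then `(n - 1) S² = V - W² / n`, so `(S² - σ²)²`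
is a polynomial in `W` and `V`, and its expectation is a combination of the mixed moments
`E[Wᵃ Vᵇ]` with `a + 2b ≤ 4`. Adding one observation at a time, these moments satisfy a
binomial recursion in the sample size, which gives
`E[(S² - σ²)²] = E[((X - m)² - σ²)²] / n + 2σ⁴ / (n (n - 1))`.
The first term vanishes exactly when `(X - m)² = σ²` almost surely, i.e. when `X` takes the two
values `m ± σ`, necessarily with probability `1/2` each since its mean is `m`.
-/

open MeasureTheory ProbabilityTheory Finset
open scoped ENNReal

section ProductMeasure

variable {α : Type*} [MeasurableSpace α] (ν : Measure α) [SigmaFinite ν] {k : ℕ}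

theorem integrable_mul_tail {f : α → ℝ} {g : (Fin k → α) → ℝ} (hf : Integrable f ν)
    (hg : Integrable g (Measure.pi fun _ => ν)) :
    Integrable (fun x => f (x 0) * g (Fin.tail x)) (Measure.pi fun _ => ν) := by
  have h := measurePreserving_piFinSuccAbove (fun _ : Fin (k + 1) => ν) 0
  exact (h.integrable_comp_emb (MeasurableEquiv.measurableEmbedding _)).2 (hf.mul_prod hg)

theorem integral_mul_tail (f : α → ℝ) (g : (Fin k → α) → ℝ) :
    ∫ x, f (x 0) * g (Fin.tail x) ∂(Measure.pi fun _ => ν) =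
      (∫ t, f t ∂ν) * ∫ y, g y ∂(Measure.pi fun _ => ν) := by
  have h := measurePreserving_piFinSuccAbove (fun _ : Fin (k + 1) => ν) 0
  rw [← integral_prod_mul, ← h.integral_comp (MeasurableEquiv.measurableEmbedding _)]
  rfl

end ProductMeasure

def centeredSum (m : ℝ) {k : ℕ} (x : Fin k → ℝ) : ℝ := ∑ i, (x i - m)

def centeredSqSum (m : ℝ) {k : ℕ} (x : Fin k → ℝ) : ℝ := ∑ i, (x i - m) ^ 2

theorem centeredSum_pow_mul_centeredSqSum_pow_succ (m : ℝ) {k : ℕ} (x : Fin (k + 1) → ℝ)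
    (a b : ℕ) :
    centeredSum m x ^ a * centeredSqSum m x ^ b =
      ∑ i ∈ range (a + 1), ∑ j ∈ range (b + 1), (a.choose i * b.choose j : ℝ) *
        ((x 0 - m) ^ (i + 2 * j) *
          (centeredSum m (Fin.tail x) ^ (a - i) * centeredSqSum m (Fin.tail x) ^ (b - j))) := by
  have hW : centeredSum m x = (x 0 - m) + centeredSum m (Fin.tail x) := by
    simp only [centeredSum, Fin.sum_univ_succ, Fin.tail]
  have hV : centeredSqSum m x = (x 0 - m) ^ 2 + centeredSqSum m (Fin.tail x) := by
    simp only [centeredSqSum, Fin.sum_univ_succ, Fin.tail]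
  rw [hW, hV, add_pow, add_pow, sum_mul_sum]
  refine sum_congr rfl fun i _ => sum_congr rfl fun j _ => ?_
  rw [pow_add, pow_mul]
  ring

section MixedMoment

variable (ν : Measure ℝ) [IsProbabilityMeasure ν] (m : ℝ)

noncomputable def mixedMoment (k a b : ℕ) : ℝ :=
  ∫ x, centeredSum m x ^ a * centeredSqSum m x ^ b ∂(Measure.pi fun _ : Fin k => ν)

variable {ν m}

theorem integrable_centeredSum_pow_mul_centeredSqSum_pow {N : ℕ}
    (hν : ∀ r ≤ N, Integrable (fun t => (t - m) ^ r) ν) (k : ℕ) {a b : ℕ} (hab : a + 2 * b ≤ N) :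
    Integrable (fun x : Fin k → ℝ => centeredSum m x ^ a * centeredSqSum m x ^ b)
      (Measure.pi fun _ => ν) := by
  induction k generalizing a b with
  | zero => simp [centeredSum, centeredSqSum]
  | succ k ih =>
    simp_rw [centeredSum_pow_mul_centeredSqSum_pow_succ]
    refine integrable_finsetSum _ fun i hi => integrable_finsetSum _ fun j hj => ?_
    rw [mem_range] at hi hj
    exact (integrable_mul_tail ν (hν _ (by omega)) (ih (by omega))).const_mul _

theorem mixedMoment_zero_sample (a b : ℕ) : mixedMoment ν m 0 a b = 0 ^ a * 0 ^ b := by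
  simp [mixedMoment, centeredSum, centeredSqSum]

theorem mixedMoment_succ_sample {a b : ℕ}
    (hν : ∀ r ≤ a + 2 * b, Integrable (fun t => (t - m) ^ r) ν) (k : ℕ) :
    mixedMoment ν m (k + 1) a b =
      ∑ i ∈ range (a + 1), ∑ j ∈ range (b + 1), (a.choose i * b.choose j : ℝ) *
        ((∫ t, (t - m) ^ (i + 2 * j) ∂ν) * mixedMoment ν m k (a - i) (b - j)) := by
  have hterm : ∀ i ∈ range (a + 1), ∀ j ∈ range (b + 1),
      Integrable (fun x : Fin (k + 1) → ℝ => (x 0 - m) ^ (i + 2 * j) *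
        (centeredSum m (Fin.tail x) ^ (a - i) * centeredSqSum m (Fin.tail x) ^ (b - j)))
        (Measure.pi fun _ => ν) := fun i hi j hj => by
    rw [mem_range] at hi hj
    exact integrable_mul_tail ν (hν _ (by omega))
      (integrable_centeredSum_pow_mul_centeredSqSum_pow hν k (by omega))
  simp_rw [mixedMoment, centeredSum_pow_mul_centeredSqSum_pow_succ]
  rw [integral_finsetSum _ fun i hi =>
    integrable_finsetSum _ fun j hj => (hterm i hi j hj).const_mul _]
  refine sum_congr rfl fun i hi => ?_
  rw [integral_finsetSum _ fun j hj => (hterm i hi j hj).const_mul _]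
  refine sum_congr rfl fun j _ => ?_
  rw [integral_const_mul, integral_mul_tail ν (fun t => (t - m) ^ (i + 2 * j))
    (fun y => centeredSum m y ^ (a - i) * centeredSqSum m y ^ (b - j))]

@[simp]
theorem mixedMoment_zero_zero (k : ℕ) : mixedMoment ν m k 0 0 = 1 := by
  simp [mixedMoment]

theorem mixedMoment_one_zero (hν : ∀ r ≤ 4, Integrable (fun t => (t - m) ^ r) ν)
    (h1 : ∫ t, (t - m) ∂ν = 0) (k : ℕ) : mixedMoment ν m k 1 0 = 0 := by
  induction k with
  | zero => simp [mixedMoment_zero_sample]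
  | succ k ih =>
    rw [mixedMoment_succ_sample (fun r hr => hν r (by omega))]
    simp [sum_range_succ, ih, h1]

theorem mixedMoment_two_zero (hν : ∀ r ≤ 4, Integrable (fun t => (t - m) ^ r) ν)
    (h1 : ∫ t, (t - m) ∂ν = 0) (k : ℕ) :
    mixedMoment ν m k 2 0 = k * ∫ t, (t - m) ^ 2 ∂ν := by
  induction k with
  | zero => simp [mixedMoment_zero_sample]
  | succ k ih =>
    rw [mixedMoment_succ_sample (fun r hr => hν r (by omega))]
    simp [sum_range_succ, ih, h1, mixedMoment_one_zero hν h1]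
    ring

theorem mixedMoment_four_zero (hν : ∀ r ≤ 4, Integrable (fun t => (t - m) ^ r) ν)
    (h1 : ∫ t, (t - m) ∂ν = 0) (k : ℕ) :
    mixedMoment ν m k 4 0 =
      k * (∫ t, (t - m) ^ 4 ∂ν) + 3 * k * (k - 1) * (∫ t, (t - m) ^ 2 ∂ν) ^ 2 := by
  induction k with
  | zero => simp [mixedMoment_zero_sample]
  | succ k ih =>
    rw [mixedMoment_succ_sample hν]
    simp [sum_range_succ, ih, h1, mixedMoment_one_zero hν h1, mixedMoment_two_zero hν h1,
      Nat.choose]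
    ring

theorem mixedMoment_zero_one (hν : ∀ r ≤ 4, Integrable (fun t => (t - m) ^ r) ν) (k : ℕ) :
    mixedMoment ν m k 0 1 = k * ∫ t, (t - m) ^ 2 ∂ν := by
  induction k with
  | zero => simp [mixedMoment_zero_sample]
  | succ k ih =>
    rw [mixedMoment_succ_sample (fun r hr => hν r (by omega))]
    simp [sum_range_succ, ih]
    ring

theorem mixedMoment_zero_two (hν : ∀ r ≤ 4, Integrable (fun t => (t - m) ^ r) ν) (k : ℕ) :
    mixedMoment ν m k 0 2 =
      k * (∫ t, (t - m) ^ 4 ∂ν) + k * (k - 1) * (∫ t, (t - m) ^ 2 ∂ν) ^ 2 := by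
  induction k with
  | zero => simp [mixedMoment_zero_sample]
  | succ k ih =>
    rw [mixedMoment_succ_sample hν]
    simp [sum_range_succ, ih, mixedMoment_zero_one hν]
    ring

theorem mixedMoment_two_one (hν : ∀ r ≤ 4, Integrable (fun t => (t - m) ^ r) ν)
    (h1 : ∫ t, (t - m) ∂ν = 0) (k : ℕ) :
    mixedMoment ν m k 2 1 =
      k * (∫ t, (t - m) ^ 4 ∂ν) + k * (k - 1) * (∫ t, (t - m) ^ 2 ∂ν) ^ 2 := by
  induction k with
  | zero => simp [mixedMoment_zero_sample]
  | succ k ih =>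
    rw [mixedMoment_succ_sample hν]
    simp [sum_range_succ, ih, h1, mixedMoment_one_zero hν h1, mixedMoment_two_zero hν h1,
      mixedMoment_zero_one hν]
    ring

end MixedMoment

theorem sum_sub_mean_sq (m : ℝ) {n : ℕ} (x : Fin n → ℝ) :
    ∑ i, (x i - (∑ j, x j) / n) ^ 2 = centeredSqSum m x - centeredSum m x ^ 2 / n := by
  rcases Nat.eq_zero_or_pos n with rfl | hn
  · simp [centeredSqSum, centeredSum]
  have hn' : (n : ℝ) ≠ 0 := by positivity
  have hmean : (∑ j, x j) / n = m + centeredSum m x / n := by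
    simp only [centeredSum, sum_sub_distrib, sum_const, card_univ, Fintype.card_fin, nsmul_eq_mul]
    field_simp
    ring
  have hexpand : ∀ i, (x i - (m + centeredSum m x / n)) ^ 2 =
      (x i - m) ^ 2 - 2 * (centeredSum m x / n) * (x i - m) + (centeredSum m x / n) ^ 2 :=
    fun i => by ring
  simp_rw [hmean, hexpand]
  rw [sum_add_distrib, sum_sub_distrib, ← mul_sum, sum_const, card_univ, Fintype.card_fin,
    nsmul_eq_mul, ← centeredSum, ← centeredSqSum]
  field_simp
  ring

noncomputable def sampleVariance {n : ℕ} (x : Fin n → ℝ) : ℝ :=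
  (∑ i, (x i - (∑ j, x j) / n) ^ 2) / (n - 1)

theorem integrable_sub_pow_of_memLp {ν : Measure ℝ} [IsFiniteMeasure ν] {N : ℕ}
    (h : MemLp id N ν) (m : ℝ) {r : ℕ} (hr : r ≤ N) : Integrable (fun t => (t - m) ^ r) ν := by
  have hc : MemLp (fun t => t - m) r ν :=
    (h.sub (memLp_const m)).mono_exponent (by exact_mod_cast hr)
  exact hc.integrable_norm_pow'.mono' (by fun_prop) (ae_of_all _ fun t => by simp [norm_pow])

theorem integrable_sub_sq_sub_sq {ν : Measure ℝ} [IsFiniteMeasure ν] {m : ℝ}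
    (hν : ∀ r ≤ 4, Integrable (fun t => (t - m) ^ r) ν) (c : ℝ) :
    Integrable (fun t => ((t - m) ^ 2 - c) ^ 2) ν := by
  have h2 := hν 2 (by norm_num)
  have h4 := hν 4 (by norm_num)
  have hexpand : ∀ t : ℝ, ((t - m) ^ 2 - c) ^ 2 = (t - m) ^ 4 - 2 * c * (t - m) ^ 2 + c ^ 2 :=
    fun t => by ring
  simp_rw [hexpand]
  fun_prop

theorem integral_sub_sq_sub_sq {ν : Measure ℝ} [IsProbabilityMeasure ν] {m σ2 : ℝ}
    (hν : ∀ r ≤ 4, Integrable (fun t => (t - m) ^ r) ν) (hσ2 : ∫ t, (t - m) ^ 2 ∂ν = σ2) :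
    ∫ t, ((t - m) ^ 2 - σ2) ^ 2 ∂ν = (∫ t, (t - m) ^ 4 ∂ν) - σ2 ^ 2 := by
  have h2 := hν 2 (by norm_num)
  have h4 := hν 4 (by norm_num)
  have hexpand : ∀ t : ℝ, ((t - m) ^ 2 - σ2) ^ 2 = (t - m) ^ 4 - 2 * σ2 * (t - m) ^ 2 + σ2 ^ 2 :=
    fun t => by ring
  simp_rw [hexpand]
  rw [integral_add (by fun_prop) (by fun_prop), integral_sub h4 (by fun_prop), integral_const_mul,
    hσ2]
  simp
  ring

theorem integral_sampleVariance_sub_sq {ν : Measure ℝ} [IsProbabilityMeasure ν] {m : ℝ}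
    (hν : ∀ r ≤ 4, Integrable (fun t => (t - m) ^ r) ν) (h1 : ∫ t, (t - m) ∂ν = 0)
    {σ2 : ℝ} (hσ2 : ∫ t, (t - m) ^ 2 ∂ν = σ2) {n : ℕ} (hn : 2 ≤ n) :
    ∫ x, (sampleVariance x - σ2) ^ 2 ∂(Measure.pi fun _ : Fin n => ν) =
      (∫ t, ((t - m) ^ 2 - σ2) ^ 2 ∂ν) / n + 2 * σ2 ^ 2 / (n * (n - 1)) := by
  have hn' : (2 : ℝ) ≤ n := by exact_mod_cast hn
  have hn1 : (n : ℝ) - 1 ≠ 0 := by linarith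
  -- exponents kept explicit so that each term is the integrand of a `mixedMoment`
  have hpoly : ∀ w v : ℝ, ((v - w ^ 2 / n) / (n - 1) - σ2) ^ 2 =
      1 / (n - 1) ^ 2 * (w ^ 0 * v ^ 2) - 2 / (n * (n - 1) ^ 2) * (w ^ 2 * v ^ 1)
        + 1 / (n ^ 2 * (n - 1) ^ 2) * (w ^ 4 * v ^ 0) - 2 * σ2 / (n - 1) * (w ^ 0 * v ^ 1)
        + 2 * σ2 / (n * (n - 1)) * (w ^ 2 * v ^ 0) + σ2 ^ 2 := fun w v => by
    field_simp
    ring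
  simp_rw [sampleVariance, sum_sub_mean_sq m, hpoly]
  have hI : ∀ a b, a + 2 * b ≤ 4 → Integrable (fun x => centeredSum m x ^ a *
      centeredSqSum m x ^ b) (Measure.pi fun _ : Fin n => ν) :=
    fun a b hab => integrable_centeredSum_pow_mul_centeredSqSum_pow hν n hab
  have h02 := hI 0 2 (by norm_num)
  have h21 := hI 2 1 (by norm_num)
  have h40 := hI 4 0 (by norm_num)
  have h01 := hI 0 1 (by norm_num)
  have h20 := hI 2 0 (by norm_num)
  rw [integral_add (by fun_prop) (by fun_prop), integral_add (by fun_prop) (by fun_prop),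
    integral_sub (by fun_prop) (by fun_prop), integral_add (by fun_prop) (by fun_prop),
    integral_sub (by fun_prop) (by fun_prop)]
  simp only [integral_const_mul, integral_const, probReal_univ, one_smul]
  change 1 / ((n : ℝ) - 1) ^ 2 * mixedMoment ν m n 0 2 - _ * mixedMoment ν m n 2 1
    + _ * mixedMoment ν m n 4 0 - _ * mixedMoment ν m n 0 1 + _ * mixedMoment ν m n 2 0 + _ = _
  rw [mixedMoment_zero_two hν, mixedMoment_two_one hν h1, mixedMoment_four_zero hν h1,
    mixedMoment_zero_one hν, mixedMoment_two_zero hν h1, integral_sub_sq_sub_sq hν hσ2, hσ2]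
  field_simp
  ring

theorem integral_sampleVariance_sub_sq_of_iIndepFun {Ω : Type*} [MeasurableSpace Ω]
    {μ : Measure Ω} {n : ℕ} {X : Fin n → Ω → ℝ} (hmeas : ∀ i, Measurable (X i))
    (hindep : iIndepFun X μ) {ν : Measure ℝ} [IsProbabilityMeasure ν]
    (hident : ∀ i, μ.map (X i) = ν) {m : ℝ} (hν : ∀ r ≤ 4, Integrable (fun t => (t - m) ^ r) ν)
    (h1 : ∫ t, (t - m) ∂ν = 0) {σ2 : ℝ} (hσ2 : ∫ t, (t - m) ^ 2 ∂ν = σ2) (hn : 2 ≤ n) :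
    ∫ ω, (sampleVariance (fun i => X i ω) - σ2) ^ 2 ∂μ =
      (∫ t, ((t - m) ^ 2 - σ2) ^ 2 ∂ν) / n + 2 * σ2 ^ 2 / (n * (n - 1)) := by
  have hlaw : μ.map (fun ω i => X i ω) = Measure.pi fun _ => ν := by
    rw [hindep.map_fun_eq_pi_map fun i => (hmeas i).aemeasurable]
    simp_rw [hident]
  rw [← integral_sampleVariance_sub_sq hν h1 hσ2 hn, ← hlaw,
    integral_map (by fun_prop) (by unfold sampleVariance; fun_prop)]

noncomputable def bernoulliHalf : Measure ℝ :=
  (1 / 2 : ℝ≥0∞) • Measure.dirac 0 + (1 / 2 : ℝ≥0∞) • Measure.dirac 1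

instance : IsProbabilityMeasure bernoulliHalf :=
  ⟨by simp [bernoulliHalf, ENNReal.inv_two_add_inv_two]⟩

theorem integral_bernoulliHalf (g : ℝ → ℝ) : ∫ x, g x ∂bernoulliHalf = (g 0 + g 1) / 2 := by
  rw [bernoulliHalf, integral_add_measure, integral_smul_measure, integral_smul_measure,
    integral_dirac, integral_dirac]
  · simp
    ring
  all_goals exact (integrable_dirac enorm_lt_top).smul_measure (by simp)

theorem map_eq_map_bernoulliHalf {Ω : Type*} [MeasurableSpace Ω] {μ : Measure Ω} {Y z : Ω → ℝ}
    {a b : ℝ} (hz : μ.map z = bernoulliHalf) (hY : Y =ᵐ[μ] fun ω => a * z ω + b) :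
    μ.map Y = bernoulliHalf.map (fun t => a * t + b) := by
  have hzm : AEMeasurable z μ := .of_map_ne_zero (hz ▸ IsProbabilityMeasure.ne_zero _)
  rw [Measure.map_congr hY, ← hz, AEMeasurable.map_map_of_aemeasurable (by fun_prop) hzm]
  rfl

theorem integral_map_bernoulliHalf (g : ℝ → ℝ) {a b : ℝ} (hg : Measurable g) :
    ∫ x, g x ∂(bernoulliHalf.map fun t => a * t + b) = (g b + g (a + b)) / 2 := by
  rw [integral_map (by fun_prop) hg.aestronglyMeasurable, integral_bernoulliHalf]
  simp

theorem eq_smul_dirac_add_smul_dirac_of_ae {β : Type*} [MeasurableSpace β]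
    [MeasurableSingletonClass β] (ρ : Measure β) {u v : β} (huv : u ≠ v)
    (h : ∀ᵐ x ∂ρ, x = u ∨ x = v) : ρ = ρ {u} • Measure.dirac u + ρ {v} • Measure.dirac v := by
  rw [← Measure.restrict_singleton, ← Measure.restrict_singleton,
    ← Measure.restrict_union (by simpa using huv) (measurableSet_singleton v),
    Measure.restrict_eq_self_of_ae_mem (by simpa [or_comm] using h)]

theorem eq_bernoulliHalf_of_ae_zero_or_one (ρ : Measure ℝ) [IsProbabilityMeasure ρ]
    (h : ∀ᵐ x ∂ρ, x = 0 ∨ x = 1) (hmean : ∫ x, x ∂ρ = 1 / 2) : ρ = bernoulliHalf := by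
  have hρ := eq_smul_dirac_add_smul_dirac_of_ae ρ zero_ne_one h
  have htotal : ρ {0} + ρ {1} = 1 := by
    simpa using (congrArg (fun ρ' : Measure ℝ => ρ' Set.univ) hρ).symm
  have h1 : ρ {1} = 1 / 2 := by
    rw [hρ, integral_add_measure, integral_smul_measure, integral_smul_measure,
      integral_dirac, integral_dirac] at hmean
    · simp only [smul_eq_mul, mul_zero, mul_one, zero_add] at hmean
      rw [← ENNReal.ofReal_toReal (measure_ne_top ρ {1}), hmean, ENNReal.ofReal_div_of_pos two_pos]
      simp
    all_goals exact (integrable_dirac enorm_lt_top).smul_measure (measure_ne_top _ _)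
  have h0 : ρ {0} = 1 / 2 := by
    rw [ENNReal.eq_sub_of_add_eq (measure_ne_top ρ {1}) htotal, h1, one_div,
      ENNReal.one_sub_inv_two]
  rw [hρ, h0, h1, bernoulliHalf]

theorem map_affine_eq_bernoulliHalf_of_ae_sq_eq {ν : Measure ℝ} [IsProbabilityMeasure ν] {m σ : ℝ}
    (hσ : 0 < σ) (hint : Integrable id ν) (hmean : ∫ t, t ∂ν = m)
    (h : ∀ᵐ t ∂ν, (t - m) ^ 2 = σ ^ 2) :
    ν.map (fun t => (t - (m - σ)) / (2 * σ)) = bernoulliHalf := by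
  have hφ : Measurable fun t : ℝ => (t - (m - σ)) / (2 * σ) := by fun_prop
  have := Measure.isProbabilityMeasure_map (μ := ν) hφ.aemeasurable
  refine eq_bernoulliHalf_of_ae_zero_or_one _ ?_ ?_
  · rw [ae_map_iff hφ.aemeasurable (by measurability)]
    filter_upwards [h] with t ht
    have hroots : (t - (m - σ)) * (t - (m + σ)) = 0 := by linear_combination ht
    rcases mul_eq_zero.1 hroots with hlow | hhigh
    · left
      rw [hlow, zero_div]
    · right
      field_simp
      linarith
  · rw [integral_map hφ.aemeasurable (by fun_prop)]
    simp_rw [div_eq_mul_inv]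
    rw [integral_mul_const, integral_sub (f := fun t => t) hint (integrable_const _), hmean]
    simp
    field_simp

theorem exists_affine_bernoulliHalf_of_ae_sq_eq {Ω : Type*} [MeasurableSpace Ω] {μ : Measure Ω}
    {Y : Ω → ℝ} (hY : Measurable Y) {ν : Measure ℝ} [IsProbabilityMeasure ν]
    (hlaw : μ.map Y = ν) {m σ : ℝ} (hσ : 0 < σ) (hint : Integrable id ν)
    (hmean : ∫ t, t ∂ν = m) (h : ∀ᵐ t ∂ν, (t - m) ^ 2 = σ ^ 2) :
    ∃ a b : ℝ, a ≠ 0 ∧ ∃ z : Ω → ℝ, μ.map z = bernoulliHalf ∧ ∀ᵐ ω ∂μ, Y ω = a * z ω + b := by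
  have hφ : Measurable fun t : ℝ => (t - (m - σ)) / (2 * σ) := by fun_prop
  refine ⟨2 * σ, m - σ, by positivity, (fun t => (t - (m - σ)) / (2 * σ)) ∘ Y, ?_,
    ae_of_all _ fun ω => by simp only [Function.comp_apply]; field_simp; ring⟩
  rw [← Measure.map_map hφ hY, hlaw, map_affine_eq_bernoulliHalf_of_ae_sq_eq hσ hint hmean h]

theorem integral_sub_sq_sub_sq_map_bernoulliHalf {a b m σ2 : ℝ}
    (hm : m = ∫ t, t ∂(bernoulliHalf.map fun t => a * t + b))
    (hσ2 : σ2 = ∫ t, (t - m) ^ 2 ∂(bernoulliHalf.map fun t => a * t + b)) :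
    ∫ t, ((t - m) ^ 2 - σ2) ^ 2 ∂(bernoulliHalf.map fun t => a * t + b) = 0 := by
  have hmab : m = b + a / 2 := by
    rw [hm, integral_map_bernoulliHalf (fun t => t) measurable_id]
    ring
  have hσab : σ2 = a ^ 2 / 4 := by
    rw [hσ2, integral_map_bernoulliHalf _ (by fun_prop), hmab]
    ring
  rw [integral_map_bernoulliHalf _ (by fun_prop), hmab, hσab]
  ring

/-- **Theorem 1 of the paper.** For i.i.d. samples `X₁,…,Xₙ` (`n ≥ 2`) with variance
`σ² = α > 0` and finite fourth central moment, the unbiased sample variance `S²` satisfies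
`E[(S² − σ²)²] ≥ 2σ⁴/(n(n−1))`, with equality iff the common distribution is a symmetric
two-point distribution, i.e. `X₁ = a·z + b` a.s. with `z ∼ Bernoulli(1/2)` (law
`(1/2)δ₀ + (1/2)δ₁`), `a ≠ 0`. -/
theorem var_sample_variance_min_two_point
    {Ω : Type*} [MeasurableSpace Ω] (μ : Measure Ω)
    (n : ℕ) (hn : 2 ≤ n) (X : Fin n → Ω → ℝ)
    (hmeas : ∀ i, Measurable (X i))
    (hindep : iIndepFun X μ)
    (ν : Measure ℝ) [IsProbabilityMeasure ν]
    (hident : ∀ i, μ.map (X i) = ν)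
    (hL4 : MemLp id 4 ν)
    (m σ2 α : ℝ)
    (hm : m = ∫ x, x ∂ν)
    (hσ2 : σ2 = ∫ x, (x - m) ^ 2 ∂ν)
    (hα : σ2 = α) (hαpos : 0 < α)
    (Xbar S2 : Ω → ℝ)
    (hXbar : ∀ ω, Xbar ω = (∑ i, X i ω) / n)
    (hS2 : ∀ ω, S2 ω = (∑ i, (X i ω - Xbar ω) ^ 2) / ((n : ℝ) - 1)) :
    2 * σ2 ^ 2 / ((n : ℝ) * ((n : ℝ) - 1)) ≤ ∫ ω, (S2 ω - σ2) ^ 2 ∂μ ∧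
      ((∫ ω, (S2 ω - σ2) ^ 2 ∂μ) = 2 * σ2 ^ 2 / ((n : ℝ) * ((n : ℝ) - 1)) ↔
        ∃ a b : ℝ, a ≠ 0 ∧
          ∃ z : Ω → ℝ,
            μ.map z = (1/2 : ENNReal) • Measure.dirac (0 : ℝ)
                + (1/2 : ENNReal) • Measure.dirac (1 : ℝ) ∧
            ∀ᵐ ω ∂μ, X ⟨0, by omega⟩ ω = a * z ω + b) := by
  have hν : ∀ r ≤ 4, Integrable (fun t => (t - m) ^ r) ν :=
    fun r hr => integrable_sub_pow_of_memLp hL4 m hr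
  have hid : Integrable id ν := hL4.integrable (by norm_num)
  have h1 : ∫ t, (t - m) ∂ν = 0 := by
    rw [integral_sub (f := fun t => t) hid (integrable_const m)]
    simp [hm]
  have hS2' : S2 = fun ω => sampleVariance fun i => X i ω :=
    funext fun ω => by rw [hS2, hXbar, sampleVariance]
  rw [hS2', integral_sampleVariance_sub_sq_of_iIndepFun hmeas hindep hident hν h1 hσ2.symm hn]
  have hkurt : 0 ≤ ∫ t, ((t - m) ^ 2 - σ2) ^ 2 ∂ν := integral_nonneg fun t => sq_nonneg _
  refine ⟨le_add_of_nonneg_left (by positivity), ?_⟩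
  rw [add_eq_right, div_eq_zero_iff, or_iff_left (by positivity)]
  constructor
  · intro h0
    have hσ2pos : 0 < σ2 := hα ▸ hαpos
    have hae : ∀ᵐ t ∂ν, (t - m) ^ 2 = Real.sqrt σ2 ^ 2 := by
      filter_upwards [(integral_eq_zero_iff_of_nonneg (fun t => sq_nonneg _)
        (integrable_sub_sq_sub_sq hν σ2)).1 h0] with t ht
      rw [Real.sq_sqrt hσ2pos.le]
      simpa [sub_eq_zero] using ht
    exact exists_affine_bernoulliHalf_of_ae_sq_eq (hmeas _) (hident _)
      (Real.sqrt_pos.2 hσ2pos) hid hm.symm hae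
  · rintro ⟨a, b, -, z, hz, hX⟩
    obtain rfl : ν = bernoulliHalf.map fun t => a * t + b :=
      hident ⟨0, by omega⟩ ▸ map_eq_map_bernoulliHalf hz hX
    exact integral_sub_sq_sub_sq_map_bernoulliHalf hm hσ2
end

section
/- Let ρ be a real random variable distributed according to the mixture p·N(m₁, w) + (1−p)·N(m₂, w), with 0 < p < 1, m₁, m₂ ∈ ℝ, common variance w ≥ 0, mean μ = p·m₁ + (1−p)·m₂, α = p(1−p), and δ = m₁ − m₂. Then the fourth central moment of ρ is E[(ρ−μ)⁴] = α(1−3α)·δ⁴ + 6α·δ²·w + 3w². -/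
open MeasureTheory ProbabilityTheory

open Real Set
open scoped NNReal ENNReal

namespace GaussMix4

lemma myint_even (b : ℝ) (hb : 0 < b) (k : ℕ) :
    ∫ x : ℝ, x ^ (2*k) * Real.exp (-b * x^2)
      = b ^ (-((2*(k:ℝ)) + 1) / 2) * Real.Gamma (((2*(k:ℝ)) + 1) / 2) := by
  have h1 : ∫ x : ℝ, x ^ (2*k) * Real.exp (-b * x^2)
      = ∫ x : ℝ, |x| ^ (2*k) * Real.exp (-b * |x|^2) := by
    congr 1; funext x; rw [pow_mul, pow_mul, sq_abs]
  rw [h1, integral_comp_abs (f := fun x => x ^ (2*k) * Real.exp (-b * x^2))]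
  have h2 : ∫ x in Ioi (0:ℝ), x ^ (2*k) * Real.exp (-b * x^2)
      = ∫ x in Ioi (0:ℝ), x ^ ((2*(k:ℝ))) * Real.exp (-b * x ^ (2:ℝ)) := by
    refine setIntegral_congr_fun measurableSet_Ioi (fun x hx => ?_)
    rw [Real.rpow_two, show (2*(k:ℝ)) = ((2*k : ℕ):ℝ) by push_cast; ring, Real.rpow_natCast]
  rw [h2, integral_rpow_mul_exp_neg_mul_rpow (by norm_num)
    (by have := Nat.cast_nonneg (α := ℝ) k; linarith) hb]
  ring

lemma myint_odd (f : ℝ → ℝ) (hf : ∀ x, f (-x) = - f x) : ∫ x, f x = 0 := by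
  have A : MeasurableEmbedding (fun x:ℝ => -x) := (Homeomorph.neg ℝ).measurableEmbedding
  have h1 : ∫ x, f (-x) = ∫ x, f x := by
    rw [← A.integral_map, Measure.map_neg_eq_self]
  simp_rw [hf] at h1
  rw [integral_neg] at h1
  linarith

lemma myint_integrable (b : ℝ) (hb : 0 < b) (k : ℕ) (C : ℝ) :
    Integrable (fun x : ℝ => C * (x ^ k * Real.exp (-b * x^2))) := by
  have h := integrable_rpow_mul_exp_neg_mul_sq hb (s := ((k:ℕ):ℝ))
    (by have := Nat.cast_nonneg (α := ℝ) k; linarith)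
  have h2 : Integrable (fun x : ℝ => x ^ k * Real.exp (-b * x^2)) := by
    refine h.congr (Filter.Eventually.of_forall fun x => ?_)
    simp [Real.rpow_natCast]
  exact h2.const_mul C

lemma gaussianPDFReal_zero_eq (v : ℝ≥0) (x : ℝ) :
    gaussianPDFReal 0 v x = (√(π * (2*(v:ℝ))))⁻¹ * Real.exp (-(2*(v:ℝ))⁻¹ * x^2) := by
  rw [gaussianPDFReal]
  rw [show 2 * π * (v:ℝ) = π * (2*(v:ℝ)) by ring]
  congr 1
  rw [sub_zero]
  congr 1
  by_cases hv : (v:ℝ) = 0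
  · simp [hv]
  · field_simp

lemma rpow_half_odd (s : ℝ) (hs : 0 < s) (k : ℕ) :
    (s⁻¹ : ℝ) ^ (-((2*(k:ℝ)) + 1) / 2) = s ^ k * Real.sqrt s := by
  rw [Real.inv_rpow hs.le, ← Real.rpow_neg hs.le, Real.sqrt_eq_rpow,
    ← Real.rpow_natCast s k, ← Real.rpow_add hs]
  congr 1
  ring

lemma Gamma_three_half : Real.Gamma (3/2) = Real.sqrt π / 2 := by
  have := Real.Gamma_add_one (s := 1/2) (by norm_num)
  rw [show (1:ℝ)/2 + 1 = 3/2 by norm_num, Real.Gamma_one_half_eq] at this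
  rw [this]; ring

lemma Gamma_five_half : Real.Gamma (5/2) = 3 * Real.sqrt π / 4 := by
  have := Real.Gamma_add_one (s := 3/2) (by norm_num)
  rw [show (3:ℝ)/2 + 1 = 5/2 by norm_num, Gamma_three_half] at this
  rw [this]; ring

section moments
variable {v : ℝ≥0} (hv : v ≠ 0)

include hv

lemma hspos : (0:ℝ) < 2*(v:ℝ) := by
  have := NNReal.coe_pos.mpr (pos_iff_ne_zero.mpr hv); linarith

lemma Meven (k : ℕ) : ∫ x : ℝ, x ^ (2*k) * gaussianPDFReal 0 v x
    = (√(π * (2*(v:ℝ))))⁻¹ * ((2*(v:ℝ)) ^ k * Real.sqrt (2*(v:ℝ))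
        * Real.Gamma (((2*(k:ℝ)) + 1) / 2)) := by
  have hs : (0:ℝ) < 2*(v:ℝ) := hspos hv
  have hb : (0:ℝ) < (2*(v:ℝ))⁻¹ := by positivity
  have h1 : (fun x : ℝ => x ^ (2*k) * gaussianPDFReal 0 v x)
      = fun x => (√(π * (2*(v:ℝ))))⁻¹ * (x ^ (2*k) * Real.exp (-(2*(v:ℝ))⁻¹ * x^2)) := by
    funext x; rw [gaussianPDFReal_zero_eq]; ring
  rw [h1, integral_const_mul, myint_even _ hb k, rpow_half_odd _ hs k]

lemma M0 : ∫ x : ℝ, gaussianPDFReal 0 v x = 1 := integral_gaussianPDFReal_eq_one 0 hv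

lemma M2 : ∫ x : ℝ, x ^ 2 * gaussianPDFReal 0 v x = (v:ℝ) := by
  have hs : (0:ℝ) < 2*(v:ℝ) := hspos hv
  have h := Meven hv 1
  simp only [show 2*1=2 from rfl, Nat.cast_one, pow_one] at h
  rw [show (2*(1:ℝ)+1)/2 = 3/2 by norm_num] at h
  rw [h, Gamma_three_half, Real.sqrt_mul pi_pos.le]
  have h1 : (0:ℝ) < √π := Real.sqrt_pos.mpr pi_pos
  have h2 : (0:ℝ) < √(2*(v:ℝ)) := Real.sqrt_pos.mpr hs
  have h3 : √(2*(v:ℝ)) * √(2*(v:ℝ)) = 2*(v:ℝ) := Real.mul_self_sqrt hs.le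
  field_simp

lemma M4 : ∫ x : ℝ, x ^ 4 * gaussianPDFReal 0 v x = 3 * (v:ℝ)^2 := by
  have hs : (0:ℝ) < 2*(v:ℝ)  := hspos hv
  have h := Meven hv 2
  simp only [show 2*2=4 from rfl] at h
  rw [show (2*((2:ℕ):ℝ)+1)/2 = 5/2 by norm_num] at h
  rw [h, Gamma_five_half, Real.sqrt_mul pi_pos.le]
  have h1 : (0:ℝ) < √π := Real.sqrt_pos.mpr pi_pos
  have h2 : (0:ℝ) < √(2*(v:ℝ)) := Real.sqrt_pos.mpr hs
  have h3 : √(2*(v:ℝ)) * √(2*(v:ℝ)) = 2*(v:ℝ) := Real.mul_self_sqrt hs.le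
  field_simp
  nlinarith [h3]

end moments

lemma Modd (v : ℝ≥0) (k : ℕ) (hk : Odd k) :
    ∫ x : ℝ, x ^ k * gaussianPDFReal 0 v x = 0 := by
  refine myint_odd _ fun x => ?_
  rw [hk.neg_pow]
  have : gaussianPDFReal 0 v (-x) = gaussianPDFReal 0 v x := by
    simp [gaussianPDFReal, neg_sq, sub_zero]
  rw [this]; ring

lemma intpow (v : ℝ≥0) (hv : v ≠ 0) (k : ℕ) (c : ℝ) :
    Integrable (fun x : ℝ => c * (x ^ k * gaussianPDFReal 0 v x)) := by
  have hs : (0:ℝ) < 2*(v:ℝ) := hspos hv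
  have hb : (0:ℝ) < (2*(v:ℝ))⁻¹ := by positivity
  have h := myint_integrable ((2*(v:ℝ))⁻¹) hb k (c * (√(π * (2*(v:ℝ))))⁻¹)
  refine h.congr (Filter.Eventually.of_forall fun x => ?_)
  simp only [gaussianPDFReal_zero_eq]; ring



lemma pdf_shift' (m : ℝ) (v : ℝ≥0) (x : ℝ) :
    gaussianPDFReal 0 v (x - m) = gaussianPDFReal m v x := by
  simp [gaussianPDFReal]

lemma sumform (v : ℝ≥0) (c : ℝ) :
    (fun x : ℝ => gaussianPDFReal 0 v x * (x + c)^4)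
      = fun x => 1 * (x^4 * gaussianPDFReal 0 v x)
          + ((4*c) * (x^3 * gaussianPDFReal 0 v x)
          + ((6*c^2) * (x^2 * gaussianPDFReal 0 v x)
          + ((4*c^3) * (x^1 * gaussianPDFReal 0 v x)
          + (c^4) * (x^0 * gaussianPDFReal 0 v x)))) := by
  funext x; ring

lemma integrable_sum (v : ℝ≥0) (hv : v ≠ 0) (c : ℝ) :
    Integrable (fun x : ℝ => gaussianPDFReal 0 v x * (x + c)^4) := by
  rw [sumform]
  have H0 : Integrable (fun x : ℝ => (c^4) * (x^0 * gaussianPDFReal 0 v x)) := intpow v hv 0 _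
  have H1 : Integrable (fun x : ℝ => (4*c^3) * (x^1 * gaussianPDFReal 0 v x)
      + (c^4) * (x^0 * gaussianPDFReal 0 v x)) := (intpow v hv 1 _).add H0
  have H2 : Integrable (fun x : ℝ => (6*c^2) * (x^2 * gaussianPDFReal 0 v x)
      + ((4*c^3) * (x^1 * gaussianPDFReal 0 v x)
      + (c^4) * (x^0 * gaussianPDFReal 0 v x))) := (intpow v hv 2 _).add H1
  have H3 : Integrable (fun x : ℝ => (4*c) * (x^3 * gaussianPDFReal 0 v x)
      + ((6*c^2) * (x^2 * gaussianPDFReal 0 v x)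
      + ((4*c^3) * (x^1 * gaussianPDFReal 0 v x)
      + (c^4) * (x^0 * gaussianPDFReal 0 v x)))) := (intpow v hv 3 _).add H2
  exact (intpow v hv 4 1).add H3

lemma integral_sum (v : ℝ≥0) (hv : v ≠ 0) (c : ℝ) :
    ∫ x : ℝ, gaussianPDFReal 0 v x * (x + c)^4
      = c^4 + 6*c^2*(v:ℝ) + 3*(v:ℝ)^2 := by
  rw [sumform]
  have H0 : Integrable (fun x : ℝ => (c^4) * (x^0 * gaussianPDFReal 0 v x)) := intpow v hv 0 _
  have H1 : Integrable (fun x : ℝ => (4*c^3) * (x^1 * gaussianPDFReal 0 v x)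
      + (c^4) * (x^0 * gaussianPDFReal 0 v x)) := (intpow v hv 1 _).add H0
  have H2 : Integrable (fun x : ℝ => (6*c^2) * (x^2 * gaussianPDFReal 0 v x)
      + ((4*c^3) * (x^1 * gaussianPDFReal 0 v x)
      + (c^4) * (x^0 * gaussianPDFReal 0 v x))) := (intpow v hv 2 _).add H1
  have H3 : Integrable (fun x : ℝ => (4*c) * (x^3 * gaussianPDFReal 0 v x)
      + ((6*c^2) * (x^2 * gaussianPDFReal 0 v x)
      + ((4*c^3) * (x^1 * gaussianPDFReal 0 v x)
      + (c^4) * (x^0 * gaussianPDFReal 0 v x)))) := (intpow v hv 3 _).add H2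
  rw [integral_add (intpow v hv 4 1) H3, integral_add (intpow v hv 3 (4*c)) H2,
    integral_add (intpow v hv 2 (6*c^2)) H1, integral_add (intpow v hv 1 (4*c^3)) H0]
  simp_rw [integral_const_mul]
  have e0 : ∫ x : ℝ, x^0 * gaussianPDFReal 0 v x = 1 := by
    simp only [pow_zero, one_mul]; exact M0 hv
  rw [M4 hv, M2 hv, Modd v 3 (by decide), Modd v 1 (by decide), e0]
  ring

lemma integrable_dirac'' (f : ℝ → ℝ) (hf : Measurable f) (a : ℝ) :
    Integrable f (Measure.dirac a) := by
  refine ⟨hf.aestronglyMeasurable, ?_⟩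
  rw [HasFiniteIntegral, lintegral_dirac]
  exact ENNReal.coe_lt_top

lemma smulform (m t : ℝ) (v : ℝ≥0) :
    (fun x : ℝ => ((gaussianPDFReal m v x).toNNReal : ℝ≥0) • (x - t)^4)
      = fun x => (fun y => gaussianPDFReal 0 v y * (y + (m - t))^4) (x - m) := by
  funext x
  simp only [NNReal.smul_def, smul_eq_mul]
  rw [Real.coe_toNNReal _ (gaussianPDFReal_nonneg m v x), pdf_shift',
    show x - m + (m - t) = x - t by ring]

lemma gaussian_integrable_pow4 (m t : ℝ) (v : ℝ≥0) :
    Integrable (fun x : ℝ => (x - t)^4) (gaussianReal m v) := by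
  have hmeas : Measurable (fun x : ℝ => (x - t)^4) :=
    (measurable_id.sub_const t).pow_const 4
  by_cases hv : v = 0
  · rw [hv, gaussianReal_zero_var]
    exact integrable_dirac'' _ hmeas _
  · rw [gaussianReal_of_var_ne_zero _ hv, gaussianPDF_def]
    rw [show (fun x => ENNReal.ofReal (gaussianPDFReal m v x))
        = fun x => ((gaussianPDFReal m v x).toNNReal : ℝ≥0∞) from rfl]
    rw [integrable_withDensity_iff_integrable_smul
      ((measurable_gaussianPDFReal m v).real_toNNReal)]
    have h := (integrable_sum v hv (m - t)).comp_sub_right m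
    exact (smulform m t v) ▸ h

lemma gaussian_central4 (m t : ℝ) (v : ℝ≥0) :
    ∫ x, (x - t)^4 ∂(gaussianReal m v)
      = (m-t)^4 + 6*(m-t)^2*(v:ℝ) + 3*(v:ℝ)^2 := by
  by_cases hv : v = 0
  · rw [hv, gaussianReal_zero_var, integral_dirac]
    norm_num
  · rw [gaussianReal_of_var_ne_zero _ hv, gaussianPDF_def]
    rw [show (fun x => ENNReal.ofReal (gaussianPDFReal m v x))
        = fun x => ((gaussianPDFReal m v x).toNNReal : ℝ≥0∞) from rfl]
    rw [integral_withDensity_eq_integral_smul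
      ((measurable_gaussianPDFReal m v).real_toNNReal), smulform m t v,
      integral_sub_right_eq_self (fun y => gaussianPDFReal 0 v y * (y + (m - t))^4) m,
      integral_sum v hv (m - t)]

end GaussMix4

/-- For `ρ` distributed as the two-component Gaussian mixture
`p·N(m₁, w) + (1−p)·N(m₂, w)` with `0 < p < 1`, common variance `w ≥ 0`, mean
`μ = p·m₁ + (1−p)·m₂`, `α = p(1−p)` and `δ = m₁ − m₂`, the fourth central moment is
`E[(ρ−μ)⁴] = α(1−3α)·δ⁴ + 6α·δ²·w + 3w²`. -/
theorem gaussian_mixture_fourth_central_moment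
    (p : ℝ) (hp0 : 0 < p) (hp1 : p < 1) (m₁ m₂ : ℝ) (w : NNReal)
    (ν : Measure ℝ)
    (hν : ν = ENNReal.ofReal p • gaussianReal m₁ w
        + ENNReal.ofReal (1 - p) • gaussianReal m₂ w)
    (μmean α δ : ℝ) (hμ : μmean = p * m₁ + (1 - p) * m₂)
    (hα : α = p * (1 - p)) (hδ : δ = m₁ - m₂) :
    (∫ x, (x - μmean) ^ 4 ∂ν)
      = α * (1 - 3 * α) * δ ^ 4 + 6 * α * δ ^ 2 * (w : ℝ) + 3 * (w : ℝ) ^ 2 := by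
  subst hν hμ hα hδ
  have h1 : Integrable (fun x : ℝ => (x - (p * m₁ + (1 - p) * m₂)) ^ 4)
      (ENNReal.ofReal p • gaussianReal m₁ w) :=
    (GaussMix4.gaussian_integrable_pow4 m₁ _ w).smul_measure ENNReal.ofReal_ne_top
  have h2 : Integrable (fun x : ℝ => (x - (p * m₁ + (1 - p) * m₂)) ^ 4)
      (ENNReal.ofReal (1 - p) • gaussianReal m₂ w) :=
    (GaussMix4.gaussian_integrable_pow4 m₂ _ w).smul_measure ENNReal.ofReal_ne_top
  rw [integral_add_measure h1 h2, integral_smul_measure, integral_smul_measure,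
    GaussMix4.gaussian_central4, GaussMix4.gaussian_central4, ENNReal.toReal_ofReal hp0.le,
    ENNReal.toReal_ofReal (by linarith : (0:ℝ) ≤ 1 - p), smul_eq_mul, smul_eq_mul]
  ring
end

section
/- Let ρ be a real random variable distributed according to the mixture p·N(m₁, w) + (1−p)·N(m₂, w), with 0 < p < 1, w ≥ 0, α = p(1−p), and δ = m₁ − m₂, and assume σ² = α·δ² + w > 0. Then the kurtosis of ρ satisfies κ(ρ) = 3 + α(1−6α)·δ⁴ / (α·δ² + w)². -/
/-!
The moment generating function `M t = exp (a t + v t² / 2)` of `N(a, v)` satisfies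
`M' = (a + v t) M`; differentiating this `n + 1` times and evaluating at `0` gives the recursion
`E[X^(n+2)] = a E[X^(n+1)] + (n + 1) v E[X^n]`, hence `E[X²] = a² + v` and
`E[X⁴] = a⁴ + 6 a² v + 3 v²`. Seen from the mixture mean, the two components are Gaussians with
means `(1 - p) δ` and `-p δ`, and averaging their moments with weights `p`, `1 - p` gives
`σ² = α δ² + w` and `m₄ = α (1 - 3α) δ⁴ + 6 α δ² w + 3 w² = 3 σ⁴ + α (1 - 6α) δ⁴`.
-/

open MeasureTheory ProbabilityTheory Real
open scoped NNReal ENNReal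

section ExpQuadratic

variable (a b : ℝ)

theorem hasDerivAt_exp_quadratic (t : ℝ) :
    HasDerivAt (fun t ↦ rexp (a * t + b * t ^ 2 / 2))
      ((a + b * t) * rexp (a * t + b * t ^ 2 / 2)) t := by
  have h := ((hasDerivAt_id' t).const_mul a).fun_add
    (((hasDerivAt_pow 2 t).const_mul b).div_const 2)
  convert h.exp using 1
  push_cast
  ring

theorem iteratedDeriv_add_two_exp_quadratic (n : ℕ) :
    iteratedDeriv (n + 2) (fun t ↦ rexp (a * t + b * t ^ 2 / 2))
      = fun t ↦ (a + b * t) * iteratedDeriv (n + 1) (fun t ↦ rexp (a * t + b * t ^ 2 / 2)) t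
          + (n + 1) * b * iteratedDeriv n (fun t ↦ rexp (a * t + b * t ^ 2 / 2)) t := by
  set M := fun t ↦ rexp (a * t + b * t ^ 2 / 2)
  have hM : ContDiff ℝ ⊤ M := by fun_prop
  have hF (k : ℕ) (t : ℝ) : HasDerivAt (iteratedDeriv k M) (iteratedDeriv (k + 1) M t) t := by
    rw [iteratedDeriv_succ]
    exact ((hM.differentiable_iteratedDeriv k (WithTop.coe_lt_top _)) t).hasDerivAt
  have hlin (t : ℝ) : HasDerivAt (fun t ↦ a + b * t) b t := by
    simpa using ((hasDerivAt_id t).const_mul b).const_add a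
  induction n with
  | zero =>
    have hderiv : iteratedDeriv 1 M = fun t ↦ (a + b * t) * iteratedDeriv 0 M t := by
      rw [iteratedDeriv_one, iteratedDeriv_zero]
      exact funext fun t ↦ (hasDerivAt_exp_quadratic a b t).deriv
    ext t
    have h := (hlin t).fun_mul (hF 0 t)
    rw [← hderiv] at h
    rw [(hF 1 t).unique h]
    push_cast; ring
  | succ n ih =>
    ext t
    have h := ((hlin t).fun_mul (hF (n + 1) t)).fun_add ((hF n t).const_mul ((n + 1 : ℝ) * b))
    rw [← ih] at h
    rw [(hF (n + 2) t).unique h]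
    push_cast; ring

end ExpQuadratic

theorem integral_ofReal_smul_add_ofReal_smul_measure {α E : Type*} [MeasurableSpace α]
    [NormedAddCommGroup E] [NormedSpace ℝ E] {μ₁ μ₂ : Measure α} {f : α → E} {p q : ℝ}
    (hp : 0 ≤ p) (hq : 0 ≤ q) (h₁ : Integrable f μ₁) (h₂ : Integrable f μ₂) :
    ∫ x, f x ∂(ENNReal.ofReal p • μ₁ + ENNReal.ofReal q • μ₂)
      = p • ∫ x, f x ∂μ₁ + q • ∫ x, f x ∂μ₂ := by
  rw [integral_add_measure (h₁.smul_measure ENNReal.ofReal_ne_top)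
      (h₂.smul_measure ENNReal.ofReal_ne_top), integral_smul_measure, integral_smul_measure,
    ENNReal.toReal_ofReal hp, ENNReal.toReal_ofReal hq]

namespace ProbabilityTheory

variable (m : ℝ) (v : ℝ≥0)

theorem integral_pow_gaussianReal_eq_iteratedDeriv (n : ℕ) :
    ∫ x, x ^ n ∂gaussianReal m v = iteratedDeriv n (fun t ↦ rexp (m * t + v * t ^ 2 / 2)) 0 := by
  rw [← mgf_id_gaussianReal, iteratedDeriv_mgf_zero (by simp)]
  rfl

theorem integral_pow_add_two_gaussianReal (n : ℕ) :
    ∫ x, x ^ (n + 2) ∂gaussianReal m v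
      = m * ∫ x, x ^ (n + 1) ∂gaussianReal m v + (n + 1) * v * ∫ x, x ^ n ∂gaussianReal m v := by
  simp only [integral_pow_gaussianReal_eq_iteratedDeriv, iteratedDeriv_add_two_exp_quadratic,
    mul_zero, add_zero]

theorem integral_sq_gaussianReal : ∫ x, x ^ 2 ∂gaussianReal m v = m ^ 2 + v := by
  rw [integral_pow_add_two_gaussianReal m v 0]
  simp only [zero_add, pow_one, integral_id_gaussianReal, pow_zero, integral_const, probReal_univ]
  push_cast
  ring

theorem integral_pow_three_gaussianReal :
    ∫ x, x ^ 3 ∂gaussianReal m v = m ^ 3 + 3 * m * v := by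
  rw [integral_pow_add_two_gaussianReal m v 1, integral_sq_gaussianReal]
  simp only [pow_one, integral_id_gaussianReal]
  push_cast
  ring

theorem integral_pow_four_gaussianReal :
    ∫ x, x ^ 4 ∂gaussianReal m v = m ^ 4 + 6 * m ^ 2 * v + 3 * v ^ 2 := by
  rw [integral_pow_add_two_gaussianReal m v 2, integral_pow_three_gaussianReal,
    integral_sq_gaussianReal]
  push_cast
  ring

theorem integral_sub_pow_gaussianReal (c : ℝ) (n : ℕ) :
    ∫ x, (x - c) ^ n ∂gaussianReal m v = ∫ x, x ^ n ∂gaussianReal (m - c) v := by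
  rw [← gaussianReal_map_sub_const, integral_map (by fun_prop) (by fun_prop)]

theorem integrable_sub_pow_gaussianReal (c : ℝ) (n : ℕ) :
    Integrable (fun x ↦ (x - c) ^ n) (gaussianReal m v) := by
  have h := integrable_pow_of_mem_interior_integrableExpSet
    (X := id) (μ := gaussianReal (m - c) v) (by simp) n
  rw [← gaussianReal_map_sub_const, integrable_map_measure (by fun_prop) (by fun_prop)] at h
  exact h

end ProbabilityTheory

/-- For `ρ` distributed as the two-component Gaussian mixture
`p·N(m₁, w) + (1−p)·N(m₂, w)` with `0 < p < 1`, `α = p(1−p)`, `δ = m₁ − m₂`, and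
variance `σ² = α·δ² + w > 0`, the kurtosis satisfies
`κ(ρ) = m₄/σ⁴ = 3 + α(1−6α)·δ⁴/(α·δ² + w)²`. -/
theorem gaussian_mixture_kurtosis
    (p : ℝ) (hp0 : 0 < p) (hp1 : p < 1) (m₁ m₂ : ℝ) (w : NNReal)
    (ν : Measure ℝ)
    (hν : ν = ENNReal.ofReal p • gaussianReal m₁ w
        + ENNReal.ofReal (1 - p) • gaussianReal m₂ w)
    (μmean α δ : ℝ) (hμ : μmean = p * m₁ + (1 - p) * m₂)
    (hα : α = p * (1 - p)) (hδ : δ = m₁ - m₂)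
    (hσpos : 0 < α * δ ^ 2 + (w : ℝ)) :
    (∫ x, (x - μmean) ^ 4 ∂ν) / (∫ x, (x - μmean) ^ 2 ∂ν) ^ 2
      = 3 + α * (1 - 6 * α) * δ ^ 4 / (α * δ ^ 2 + (w : ℝ)) ^ 2 := by
  have hmoment (n : ℕ) : ∫ x, (x - μmean) ^ n ∂ν
      = p * ∫ x, x ^ n ∂gaussianReal (m₁ - μmean) w
        + (1 - p) * ∫ x, x ^ n ∂gaussianReal (m₂ - μmean) w := by
    rw [hν, integral_ofReal_smul_add_ofReal_smul_measure hp0.le (by linarith)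
        (integrable_sub_pow_gaussianReal m₁ w μmean n)
        (integrable_sub_pow_gaussianReal m₂ w μmean n),
      integral_sub_pow_gaussianReal, integral_sub_pow_gaussianReal, smul_eq_mul, smul_eq_mul]
  have hd₁ : m₁ - μmean = (1 - p) * δ := by rw [hμ, hδ]; ring
  have hd₂ : m₂ - μmean = -(p * δ) := by rw [hμ, hδ]; ring
  have hvar : ∫ x, (x - μmean) ^ 2 ∂ν = α * δ ^ 2 + w := by
    rw [hmoment, integral_sq_gaussianReal, integral_sq_gaussianReal, hd₁, hd₂, hα]
    ring
  have hfourth : ∫ x, (x - μmean) ^ 4 ∂ν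
      = α * (1 - 3 * α) * δ ^ 4 + 6 * α * δ ^ 2 * w + 3 * (w : ℝ) ^ 2 := by
    rw [hmoment, integral_pow_four_gaussianReal, integral_pow_four_gaussianReal, hd₁, hd₂, hα]
    ring
  rw [hvar, hfourth]
  field_simp
  ring
end
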